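/- For any real number α > 0, there exists a constant N depending only on α such that for every integer k ≥ 2, the sum ∑_{j=1}^{k-1} j^{-(1+α)} (k-j)^{-(1+α)} is at most N · k^{-(1+α)}. -/

import Mathlib

/-- Discrete convolution inequality: for any `α > 0` there is `N = N(α)` such that
for every integer `k ≥ 2`, `∑_{j=1}^{k-1} j^{-(1+α)} (k-j)^{-(1+α)} ≤ N k^{-(1+α)}`. -/
theorem discrete_convolution_bound (α : ℝ) (hα : 0 < α) :
    ∃ N : ℝ, 0 < N ∧ ∀ k : ℕ, 2 ≤ k →
      ∑ j ∈ Finset.Ico 1 k,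
          (j : ℝ) ^ (-(1 + α)) * ((k - j : ℕ) : ℝ) ^ (-(1 + α))
        ≤ N * (k : ℝ) ^ (-(1 + α)) := by
  set p : ℝ := -(1 + α) with hp
  have hplt : p < -1 := by rw [hp]; linarith
  have hsum : Summable (fun n : ℕ => (n : ℝ) ^ p) := Real.summable_nat_rpow.2 hplt
  set S : ℝ := ∑' n : ℕ, (n : ℝ) ^ p with hS
  have hnonneg : ∀ n : ℕ, 0 ≤ (n : ℝ) ^ p := fun n => Real.rpow_nonneg (Nat.cast_nonneg n) p
  have hSpos : (0 : ℝ) < S := by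
    have h1 : ((1 : ℕ) : ℝ) ^ p ≤ S := Summable.le_tsum hsum 1 (fun n _ => hnonneg n)
    have : ((1 : ℕ) : ℝ) ^ p = 1 := by simp
    linarith [h1, this ▸ h1]
  have h2pos : (0 : ℝ) < 2 ^ (1 + α) := Real.rpow_pos_of_pos (by norm_num) _
  refine ⟨2 ^ (1 + α) * (2 * S), by positivity, fun k hk => ?_⟩
  have hk0 : (0 : ℝ) < (k : ℝ) := by exact_mod_cast Nat.lt_of_lt_of_le (by norm_num) hk
  have hkp : (0 : ℝ) < (k : ℝ) ^ p := Real.rpow_pos_of_pos hk0 p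
  have hhalf : ((k : ℝ) / 2) ^ p = 2 ^ (1 + α) * (k : ℝ) ^ p := by
    rw [Real.div_rpow hk0.le (by norm_num : (0:ℝ) ≤ 2), hp,
      Real.rpow_neg (by norm_num : (0:ℝ) ≤ 2)]
    field_simp
  have key : ∀ j ∈ Finset.Ico 1 k,
      (j : ℝ) ^ p * ((k - j : ℕ) : ℝ) ^ p
        ≤ 2 ^ (1 + α) * (k : ℝ) ^ p * ((j : ℝ) ^ p + ((k - j : ℕ) : ℝ) ^ p) := by
    intro j hj
    obtain ⟨hj1, hjk⟩ := Finset.mem_Ico.mp hj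
    have ha1 : (1 : ℝ) ≤ (j : ℝ) := by exact_mod_cast hj1
    have hb1 : (1 : ℝ) ≤ ((k - j : ℕ) : ℝ) := by
      have : 1 ≤ k - j := by omega
      exact_mod_cast this
    have hab : (j : ℝ) + ((k - j : ℕ) : ℝ) = (k : ℝ) := by
      have : j + (k - j) = k := by omega
      exact_mod_cast this
    have hap : 0 ≤ (j : ℝ) ^ p := hnonneg j
    have hbp : 0 ≤ ((k - j : ℕ) : ℝ) ^ p := hnonneg (k - j)
    rcases le_or_gt ((k : ℝ) / 2) (j : ℝ) with h | h
    · have hale : (j : ℝ) ^ p ≤ ((k : ℝ) / 2) ^ p :=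
        Real.rpow_le_rpow_of_nonpos (by linarith) h (by rw [hp]; linarith)
      rw [hhalf] at hale
      nlinarith [mul_le_mul_of_nonneg_right hale hbp]
    · have hble : ((k : ℝ) / 2) ≤ ((k - j : ℕ) : ℝ) := by linarith
      have hble' : ((k - j : ℕ) : ℝ) ^ p ≤ ((k : ℝ) / 2) ^ p :=
        Real.rpow_le_rpow_of_nonpos (by linarith) hble (by rw [hp]; linarith)
      rw [hhalf] at hble'
      nlinarith [mul_le_mul_of_nonneg_left hble' hap]
  have hsumle : ∑ j ∈ Finset.Ico 1 k, (j : ℝ) ^ p ≤ S :=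
    Summable.sum_le_tsum _ (fun n _ => hnonneg n) hsum
  have hreflect : ∑ j ∈ Finset.Ico 1 k, ((k - j : ℕ) : ℝ) ^ p
      = ∑ j ∈ Finset.Ico 1 k, (j : ℝ) ^ p := by
    have := Finset.sum_Ico_reflect (fun n : ℕ => (n : ℝ) ^ p) 1 (n := k) (m := k) (by omega)
    simpa [Nat.succ_sub_one] using this
  calc ∑ j ∈ Finset.Ico 1 k, (j : ℝ) ^ p * ((k - j : ℕ) : ℝ) ^ p
      ≤ ∑ j ∈ Finset.Ico 1 k,
          2 ^ (1 + α) * (k : ℝ) ^ p * ((j : ℝ) ^ p + ((k - j : ℕ) : ℝ) ^ p) :=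
        Finset.sum_le_sum key
    _ = 2 ^ (1 + α) * (k : ℝ) ^ p *
          (∑ j ∈ Finset.Ico 1 k, (j : ℝ) ^ p + ∑ j ∈ Finset.Ico 1 k, ((k - j : ℕ) : ℝ) ^ p) := by
        rw [← Finset.mul_sum, Finset.sum_add_distrib]
    _ = 2 ^ (1 + α) * (k : ℝ) ^ p * (2 * ∑ j ∈ Finset.Ico 1 k, (j : ℝ) ^ p) := by
        rw [hreflect]; ring
    _ ≤ 2 ^ (1 + α) * (2 * S) * (k : ℝ) ^ p := by
        have h := mul_le_mul_of_nonneg_left hsumle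
          (by positivity : (0:ℝ) ≤ 2 ^ (1 + α) * (k : ℝ) ^ p * 2)
        nlinarith [h]
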